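/- Let M, N, N_T, N_R be positive integers with N = M and N_T ≥ N_R ≥ 2. Then for every (μ_R, μ_T) ∈ R1 ∪ R2, the achievable NDT expression is within a factor of 2 of the lower bound: τ_gen(μ_R, μ_T) ≤ 2 · max{ (1/N)(1 − μ_R), max_{s ∈ {1,...,N_R}} (s/(N_T·M))(1 − s·μ_R) }. -/

import Mathlib

open Finset

/-- The DoF per user `d_{01}` of the `N_T × N_R` MIMO X channel:
`d_{01} = min{M N_T/N_R, q M N_T/(N_T + q N_R − q)}` with `q = ⌊N/M⌋` if `N ≥ M`, and
`d_{01} = min{N, q N N_T/(q N_T + N_R − q)}` with `q = ⌊M/N⌋` if `N < M`. -/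
noncomputable def d01gen (M N NT NR : ℕ) : ℝ :=
  if M ≤ N then
    min ((M : ℝ)*NT/NR) (((N/M : ℕ) : ℝ)*M*NT/((NT : ℝ) + ((N/M : ℕ) : ℝ)*NR - ((N/M : ℕ) : ℝ)))
  else
    min (N : ℝ) (((M/N : ℕ) : ℝ)*N*NT/(((M/N : ℕ) : ℝ)*NT + (NR : ℝ) - ((M/N : ℕ) : ℝ)))

/-- The DoF per user `d_{0N_T} = min{M N_T/N_R, N}` of the MIMO broadcast channel. -/
noncomputable def d0NTgen (M N NT NR : ℕ) : ℝ :=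
  min ((M : ℝ)*NT/NR) (N : ℝ)

/-- Region `R1 = {(μ_R,μ_T) : μ_R + μ_T ≥ 1, 0 ≤ μ_R ≤ 1, 0 ≤ μ_T ≤ 1}`. -/
def regR1 (muR muT : ℝ) : Prop :=
  1 ≤ muR + muT ∧ 0 ≤ muR ∧ muR ≤ 1 ∧ 0 ≤ muT ∧ muT ≤ 1

/-- Region `R2 = {(μ_R,μ_T) : μ_R + μ_T < 1, μ_R ≥ 0, μ_T ≤ 1, μ_R + N_T μ_T ≥ 1}`. -/
def regR2 (NT : ℕ) (muR muT : ℝ) : Prop :=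
  muR + muT < 1 ∧ 0 ≤ muR ∧ muT ≤ 1 ∧ 1 ≤ muR + (NT : ℝ)*muT

/-- The achievable NDT expression `τ_gen` for the `N_T × N_R` network. -/
noncomputable def tauGen (M N NT NR : ℕ) (muR muT : ℝ) : ℝ :=
  if 1 ≤ muR + muT then
    (1/d0NTgen M N NT NR) * (1 - muR)
  else
    (1/d0NTgen M N NT NR
      - ((NT : ℝ)/((NT : ℝ) - 1)) * (1/d0NTgen M N NT NR - 1/d01gen M N NT NR)) * (1 - muR)
    - ((NT : ℝ)/((NT : ℝ) - 1)) * (1/d01gen M N NT NR - 1/d0NTgen M N NT NR) * muT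

/-- The NDT lower bound for the `N_T × N_R` network:
`max{ (1/N)(1 − μ_R), max_{s∈{1,…,N_R}} (s/(N_T M))(1 − s μ_R) }`. -/
noncomputable def tauLGen (M N NT NR : ℕ) (hNR : 0 < NR) (muR : ℝ) : ℝ :=
  max ((1/(N : ℝ)) * (1 - muR))
    ((Finset.Icc 1 NR).sup' (Finset.nonempty_Icc.mpr hNR)
      (fun s => ((s : ℝ)/((NT : ℝ)*(M : ℝ))) * (1 - (s : ℝ)*muR)))

/-!
For `N = M` the broadcast DoF is `d_{0N_T} = M` and the X-channel DoF is
`d_{01} = M N_T / (N_T + N_R - 1)`. On `R1` the NDT is `(1 - μ_R)/M`; on `R2` it exceeds this by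
`(N_T/(N_T - 1)) (1/d_{01} - 1/d_{0N_T}) (1 - μ_R - μ_T) = (N_R - 1)(1 - μ_R - μ_T)/(M (N_T - 1))`,
which is again at most `(1 - μ_R)/M` because `N_R ≤ N_T` and `μ_T > 0` on `R2`.
So `τ_gen ≤ 2 (1 - μ_R)/M`, twice the first term of the lower bound.
-/

lemma tauGen_of_not_one_le {M N NT NR : ℕ} {muR muT : ℝ} (h : ¬ 1 ≤ muR + muT) :
    tauGen M N NT NR muR muT = 1 / d0NTgen M N NT NR * (1 - muR)
      + NT / (NT - 1) * (1 / d01gen M N NT NR - 1 / d0NTgen M N NT NR) * (1 - muR - muT) := by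
  rw [tauGen, if_neg h]
  ring

lemma d0NTgen_self {M NT NR : ℕ} (hNR : 0 < NR) (hNTR : NR ≤ NT) :
    d0NTgen M M NT NR = M := by
  have hNRpos : (0 : ℝ) < NR := by exact_mod_cast hNR
  have hNTR' : (NR : ℝ) ≤ NT := by exact_mod_cast hNTR
  refine min_eq_right ?_
  rw [le_div_iff₀ hNRpos]
  exact mul_le_mul_of_nonneg_left hNTR' M.cast_nonneg

lemma d01gen_self {M NT NR : ℕ} (hM : 0 < M) (hNR : 0 < NR) (hNT : 0 < NT) :
    d01gen M M NT NR = M * NT / (NT + NR - 1) := by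
  have hNRpos : (0 : ℝ) < NR := by exact_mod_cast hNR
  have hNT1 : (1 : ℝ) ≤ NT := by exact_mod_cast hNT
  rw [d01gen, if_pos le_rfl, Nat.div_self hM, Nat.cast_one, one_mul, one_mul, min_eq_right]
  exact div_le_div_of_nonneg_left (by positivity) hNRpos (by linarith)

lemma one_div_d01gen_sub_one_div_d0NTgen_self {M NT NR : ℕ} (hM : 0 < M) (hNR : 0 < NR)
    (hNTR : NR ≤ NT) :
    1 / d01gen M M NT NR - 1 / d0NTgen M M NT NR = (NR - 1) / (M * NT) := by
  have hMpos : (0 : ℝ) < M := by exact_mod_cast hM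
  have hNTpos : (0 : ℝ) < NT := by exact_mod_cast hNR.trans_le hNTR
  rw [d01gen_self hM hNR (hNR.trans_le hNTR), d0NTgen_self hNR hNTR]
  field_simp
  ring

lemma tauGen_self_of_one_le {M NT NR : ℕ} (hNR : 0 < NR) (hNTR : NR ≤ NT) {muR muT : ℝ}
    (h : 1 ≤ muR + muT) :
    tauGen M M NT NR muR muT = 1 / M * (1 - muR) := by
  rw [tauGen, if_pos h, d0NTgen_self hNR hNTR]

lemma tauGen_self_of_not_one_le {M NT NR : ℕ} (hM : 0 < M) (hNR : 0 < NR) (hNTR : NR ≤ NT)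
    (hNT : 1 < NT) {muR muT : ℝ} (h : ¬ 1 ≤ muR + muT) :
    tauGen M M NT NR muR muT
      = 1 / M * (1 - muR) + (NR - 1) * (1 - muR - muT) / (M * (NT - 1)) := by
  have hNT1 : (NT : ℝ) - 1 ≠ 0 := sub_ne_zero.mpr (by exact_mod_cast hNT.ne')
  have hNT0 : (NT : ℝ) ≠ 0 := by exact_mod_cast (zero_lt_one.trans hNT).ne'
  rw [tauGen_of_not_one_le h, one_div_d01gen_sub_one_div_d0NTgen_self hM hNR hNTR,
    d0NTgen_self hNR hNTR]
  field_simp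

lemma regR2.pos_muT {NT : ℕ} (hNT : 1 ≤ NT) {muR muT : ℝ} (h : regR2 NT muR muT) : 0 < muT := by
  obtain ⟨hlt, -, -, hcover⟩ := h
  have hNT' : (1 : ℝ) ≤ NT := by exact_mod_cast hNT
  nlinarith

lemma regR2.mul_sub_le {NT NR : ℕ} (hNR : 1 ≤ NR) (hNTR : NR ≤ NT) {muR muT : ℝ}
    (h : regR2 NT muR muT) :
    ((NR : ℝ) - 1) * (1 - muR - muT) ≤ (NT - 1) * (1 - muR) := by
  have hmuT := h.pos_muT (hNR.trans hNTR)
  have hNR' : (1 : ℝ) ≤ NR := by exact_mod_cast hNR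
  have hNTR' : (NR : ℝ) ≤ NT := by exact_mod_cast hNTR
  calc ((NR : ℝ) - 1) * (1 - muR - muT) ≤ (NT - 1) * (1 - muR - muT) := by
        gcongr
        linarith [h.1]
    _ ≤ (NT - 1) * (1 - muR) := by nlinarith

lemma tauGen_self_le_two_mul {M NT NR : ℕ} (hM : 0 < M) (hNR : 2 ≤ NR) (hNTR : NR ≤ NT)
    {muR muT : ℝ} (h : regR1 muR muT ∨ regR2 NT muR muT) :
    tauGen M M NT NR muR muT ≤ 2 * (1 / M * (1 - muR)) := by
  have hMpos : (0 : ℝ) < M := by exact_mod_cast hM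
  by_cases hc : 1 ≤ muR + muT
  · have hmuR : muR ≤ 1 := by
      rcases h with h1 | h2
      · exact h1.2.2.1
      · linarith [h2.1]
    have : 0 ≤ 1 / (M : ℝ) * (1 - muR) := mul_nonneg (by positivity) (by linarith)
    rw [tauGen_self_of_one_le (by omega) hNTR hc]
    linarith
  · have hR2 : regR2 NT muR muT := h.resolve_left fun h1 => hc h1.1
    have hNT1 : (0 : ℝ) < NT - 1 := sub_pos.mpr (by exact_mod_cast (show 1 < NT by omega))
    have hexcess : (NR - 1) * (1 - muR - muT) / (M * (NT - 1)) ≤ 1 / M * (1 - muR) := calc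
      (NR - 1) * (1 - muR - muT) / (M * (NT - 1)) ≤ (NT - 1) * (1 - muR) / (M * (NT - 1)) :=
          div_le_div_of_nonneg_right (hR2.mul_sub_le (by omega) hNTR) (by positivity)
      _ = 1 / M * (1 - muR) := by field_simp
    rw [tauGen_self_of_not_one_le hM (by omega) hNTR (by omega) hc]
    linarith

/-- If `N = M` and `N_T ≥ N_R ≥ 2`, then for every
`(μ_R, μ_T) ∈ R1 ∪ R2`, the achievable NDT is within a factor `2` of the lower bound:
`τ_gen(μ_R, μ_T) ≤ 2 · max{ (1/N)(1−μ_R), max_{s∈{1,…,N_R}} (s/(N_T M))(1−s μ_R) }`. -/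
theorem gen_gap_le_two (M N NT NR : ℕ) (hM : 0 < M)
    (hNM : N = M) (hNR : 2 ≤ NR) (hNTR : NR ≤ NT)
    (muR muT : ℝ) (h : regR1 muR muT ∨ regR2 NT muR muT) :
    tauGen M N NT NR muR muT ≤ 2 * tauLGen M N NT NR (by omega) muR := by
  subst hNM
  calc tauGen N N NT NR muR muT ≤ 2 * (1 / N * (1 - muR)) := tauGen_self_le_two_mul hM hNR hNTR h
    _ ≤ 2 * tauLGen N N NT NR (by omega) muR := by gcongr; exact le_max_left _ _
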